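/- Let A be a row circular binary matrix satisfying the standard assumptions. If v and v' are adjacent vertices of Q*(A), then | |supp(v)| − |supp(v')| | ≤ 1. -/

import Mathlib

open Finset

/-- Support of a vector. -/
def supp {n : ℕ} (x : Fin n → ℝ) : Set (Fin n) := {j | x j ≠ 0}

/-- Support of the `t`-th row of a matrix. -/
def rowSupp {m n : ℕ} (A : Matrix (Fin m) (Fin n) ℝ) (t : Fin m) : Set (Fin n) :=
  {j | A t j ≠ 0}

def IsBinaryMatrix {m n : ℕ} (A : Matrix (Fin m) (Fin n) ℝ) : Prop :=
  ∀ t j, A t j = 0 ∨ A t j = 1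

def IsBinaryVec {n : ℕ} (x : Fin n → ℝ) : Prop := ∀ j, x j = 0 ∨ x j = 1

/-- The polyhedron `{x | A x ≥ b, x ≥ 0}`. -/
def polyP {m n : ℕ} (A : Matrix (Fin m) (Fin n) ℝ) (b : Fin m → ℝ) : Set (Fin n → ℝ) :=
  {x | (∀ i, b i ≤ ∑ j, A i j * x j) ∧ ∀ j, 0 ≤ x j}

/-- The linear relaxation `Q(A) = {x | A x ≥ 1, x ≥ 0}`. -/
def polyQ {m n : ℕ} (A : Matrix (Fin m) (Fin n) ℝ) : Set (Fin n → ℝ) :=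
  {x | (∀ i, 1 ≤ ∑ j, A i j * x j) ∧ ∀ j, 0 ≤ x j}

/-- The set covering polyhedron `Q*(A)`: convex hull of nonnegative integer solutions of
`A x ≥ 1`. -/
def Qstar {m n : ℕ} (A : Matrix (Fin m) (Fin n) ℝ) : Set (Fin n → ℝ) :=
  convexHull ℝ {x | (∀ j, ∃ k : ℕ, x j = k) ∧ ∀ i, 1 ≤ ∑ j, A i j * x j}

/-- A vertex of a convex set is an extreme point. -/
def IsVertex {n : ℕ} (S : Set (Fin n → ℝ)) (v : Fin n → ℝ) : Prop :=
  v ∈ S.extremePoints ℝ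

/-- Two distinct vertices are adjacent when they lie on a common edge, i.e. the segment
joining them is a face (extreme subset) of `S`. -/
def AdjacentVerts {n : ℕ} (S : Set (Fin n → ℝ)) (v w : Fin n → ℝ) : Prop :=
  v ≠ w ∧ IsVertex S v ∧ IsVertex S w ∧ IsExtreme ℝ S (segment ℝ v w)

/-- There is a row support `C` with `C ∩ supp v = {p}` and `C ∩ supp v' = {p'}`. -/
def jsgEdge {m n : ℕ} (A : Matrix (Fin m) (Fin n) ℝ) (v v' : Fin n → ℝ)
    (p p' : Fin n) : Prop :=
  ∃ t, rowSupp A t ∩ supp v = {p} ∧ rowSupp A t ∩ supp v' = {p'}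

/-- The joint saturation graph of `v` and `v'` with respect to `A`. -/
def JSG {m n : ℕ} (A : Matrix (Fin m) (Fin n) ℝ) (v v' : Fin n → ℝ) :
    SimpleGraph (Fin n) where
  Adj p p' := p ≠ p' ∧ (jsgEdge A v v' p p' ∨ jsgEdge A v v' p' p)
  symm := ⟨fun p p' h => ⟨h.1.symm, h.2.symm⟩⟩
  loopless := ⟨fun p h => h.1 rfl⟩

/-- The node set of the joint saturation graph: the symmetric difference of the supports. -/
def jsgNodes {n : ℕ} (v v' : Fin n → ℝ) : Set (Fin n) :=
  (supp v \ supp v') ∪ (supp v' \ supp v)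

def JSGConnected {m n : ℕ} (A : Matrix (Fin m) (Fin n) ℝ) (v v' : Fin n → ℝ) : Prop :=
  ∀ p ∈ jsgNodes v v', ∀ q ∈ jsgNodes v v', (JSG A v v').Reachable p q

/-- One of the two partite sets is contained in a single connected component. -/
def JSGPartiteConnected {m n : ℕ} (A : Matrix (Fin m) (Fin n) ℝ) (v v' : Fin n → ℝ) : Prop :=
  (∀ p ∈ supp v \ supp v', ∀ q ∈ supp v \ supp v', (JSG A v v').Reachable p q) ∨
  (∀ p ∈ supp v' \ supp v, ∀ q ∈ supp v' \ supp v, (JSG A v v').Reachable p q)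

/-- Exactly two components, one of which is an isolated node. -/
def JSGAlmostConnected {m n : ℕ} (A : Matrix (Fin m) (Fin n) ℝ) (v v' : Fin n → ℝ) : Prop :=
  ∃ q ∈ jsgNodes v v', (∀ p, ¬ (JSG A v v').Adj q p) ∧ (jsgNodes v v' \ {q}).Nonempty ∧
    ∀ p ∈ jsgNodes v v' \ {q}, ∀ r ∈ jsgNodes v v' \ {q}, (JSG A v v').Reachable p r

/-- The (directed) circular arc from `i` to `j` in `Fin n`. -/
def arc {n : ℕ} [NeZero n] (i j : Fin n) : Set (Fin n) :=
  {k | ∃ h : ℕ, h ≤ ((j - i : Fin n) : ℕ) ∧ k = i + (Fin.ofNat n h : Fin n)}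

/-- A matrix is row circular if each row support is a circular arc. -/
def RowCircular {m n : ℕ} [NeZero n] (A : Matrix (Fin m) (Fin n) ℝ) : Prop :=
  ∀ t, ∃ i j : Fin n, rowSupp A t = arc i j

/-- The standard assumptions: binary, no dominating rows, between 2 and n-1 ones per row,
no all-zero or all-one column. -/
def StandardAssumptions {m n : ℕ} (A : Matrix (Fin m) (Fin n) ℝ) : Prop :=
  IsBinaryMatrix A ∧
  (∀ s t : Fin m, s ≠ t → ¬ rowSupp A s ⊆ rowSupp A t) ∧
  (∀ t, 2 ≤ (rowSupp A t).ncard ∧ (rowSupp A t).ncard ≤ n - 1) ∧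
  (∀ j : Fin n, (∃ t, A t j ≠ 0) ∧ (∃ t, A t j = 0))

/-- `a` and `b` occur consecutively (in either order) in the list `l`. -/
def ListConsec {α : Type*} (l : List α) (a b : α) : Prop :=
  ∃ k : ℕ, (l[k]? = some a ∧ l[k+1]? = some b) ∨ (l[k]? = some b ∧ l[k+1]? = some a)

/-- `a` and `b` occur cyclically consecutively (in either order) in the list `l`. -/
def CycConsec {α : Type*} (l : List α) (a b : α) : Prop :=
  ∃ k : ℕ, k < l.length ∧
    ((l[k]? = some a ∧ l[(k+1) % l.length]? = some b) ∨
     (l[k]? = some b ∧ l[(k+1) % l.length]? = some a))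

/-- The set `S` induces a path (possibly a single node) in `G`. -/
def IsPathOn {n : ℕ} (G : SimpleGraph (Fin n)) (S : Set (Fin n)) : Prop :=
  ∃ l : List (Fin n), l.Nodup ∧ (∀ x, x ∈ S ↔ x ∈ l) ∧
    (∀ a b, a ∈ S → G.Adj a b → ListConsec l a b) ∧
    (∀ a b, ListConsec l a b → G.Adj a b)

/-- The set `S` induces a cycle in `G`. -/
def IsCycleOn {n : ℕ} (G : SimpleGraph (Fin n)) (S : Set (Fin n)) : Prop :=
  ∃ l : List (Fin n), 3 ≤ l.length ∧ l.Nodup ∧ (∀ x, x ∈ S ↔ x ∈ l) ∧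
    (∀ a b, a ∈ S → G.Adj a b → CycConsec l a b) ∧
    (∀ a b, CycConsec l a b → G.Adj a b)

/-- `p` and `q` are cyclically consecutive elements of `S`. -/
def CyclConsecIn {n : ℕ} [NeZero n] (S : Set (Fin n)) (p q : Fin n) : Prop :=
  p ≠ q ∧ p ∈ S ∧ q ∈ S ∧ (arc p q ∩ S = {p, q} ∨ arc q p ∩ S = {p, q})

/-- The circulant matrix `C(n,2)` with row supports `{t, t+1}` (mod n). -/
def Cn2 (n : ℕ) [NeZero n] : Matrix (Fin n) (Fin n) ℝ :=
  fun t j => if j = t ∨ j = t + 1 then 1 else 0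

/-- Append a row to a matrix. -/
def appendRow {m n : ℕ} (A : Matrix (Fin m) (Fin n) ℝ) (a : Fin n → ℝ) :
    Matrix (Fin (m+1)) (Fin n) ℝ :=
  fun t j => if h : (t : ℕ) < m then A ⟨t, h⟩ j else a j

/-- A set of points is integral if all its extreme points are integer vectors. -/
def IsIntegralSet {n : ℕ} (S : Set (Fin n → ℝ)) : Prop :=
  ∀ x ∈ S.extremePoints ℝ, ∀ j, ∃ z : ℤ, x j = z

/-- A binary matrix is minimally nonideal if `Q(A)` is not integral but both restrictions
`Q(A) ∩ {x_i = 0}` and `Q(A) ∩ {x_i = 1}` are integral for every coordinate `i`. -/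
def MinimallyNonideal {m n : ℕ} (A : Matrix (Fin m) (Fin n) ℝ) : Prop :=
  ¬ IsIntegralSet (polyQ A) ∧
  ∀ i : Fin n, IsIntegralSet (polyQ A ∩ {x | x i = 0}) ∧
               IsIntegralSet (polyQ A ∩ {x | x i = 1})

/-- The matrix of the degenerate projective plane with `t+1` points and lines. -/
def Jmat (t : ℕ) : Matrix (Fin (t+1)) (Fin (t+1)) ℝ :=
  fun i j => if i = 0 then (if j = 0 then 0 else 1) else (if j = 0 ∨ j = i then 1 else 0)

/-- `A` is isomorphic to some degenerate projective plane matrix `J_t`, `t ≥ 2`. -/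
def IsoToDegenProjPlane {m n : ℕ} (A : Matrix (Fin m) (Fin n) ℝ) : Prop :=
  ∃ t : ℕ, 2 ≤ t ∧ ∃ (σ : Fin m ≃ Fin (t+1)) (τ : Fin n ≃ Fin (t+1)),
    ∀ i j, A i j = Jmat t (σ i) (τ j)

/-- `A₁` is the core of `A`: a square nonsingular row submatrix with `r` ones per row and
per column, all other rows of `A` having more than `r` ones. -/
def IsCore {m n : ℕ} (A : Matrix (Fin m) (Fin n) ℝ) (A₁ : Matrix (Fin n) (Fin n) ℝ)
    (r : ℕ) : Prop :=
  2 ≤ r ∧ A₁.det ≠ 0 ∧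
  (∃ f : Fin n → Fin m, Function.Injective f ∧ (∀ i, A₁ i = A (f i)) ∧
    ∀ t, t ∉ Set.range f → r < (rowSupp A t).ncard) ∧
  (∀ i, (rowSupp A₁ i).ncard = r) ∧ (∀ j, {i | A₁ i j ≠ 0}.ncard = r)

/-- `B₁` is the core of the blocker of `A`: a square nonsingular matrix whose rows are
binary vertices of `Q*(A)` with `s` ones per row and per column, all other binary
vertices of `Q*(A)` having more than `s` ones. -/
def IsBlockerCore {m n : ℕ} (A : Matrix (Fin m) (Fin n) ℝ) (B₁ : Matrix (Fin n) (Fin n) ℝ)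
    (s : ℕ) : Prop :=
  2 ≤ s ∧ B₁.det ≠ 0 ∧
  (∀ i, IsBinaryVec (B₁ i) ∧ IsVertex (Qstar A) (B₁ i)) ∧
  Function.Injective (fun i => B₁ i) ∧
  (∀ i, (rowSupp B₁ i).ncard = s) ∧ (∀ j, {i | B₁ i j ≠ 0}.ncard = s) ∧
  (∀ x, IsBinaryVec x → IsVertex (Qstar A) x → (∀ i, x ≠ B₁ i) → s < (supp x).ncard)

/-- `w^i` for `n = 3ν`: the complement of the characteristic vector of the residue class
`i` mod 3. -/
def wVec (n : ℕ) (i : Fin 3) : Fin n → ℝ :=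
  fun k => if (k : ℕ) % 3 = (i : ℕ) then 0 else 1

/-- `a^i` for `n = 3ν`: the characteristic vector of the residue class `i` mod 3
(`a¹ = (1,0,0,1,0,0,…)` corresponds to `i = 0`). -/
def aVec (n : ℕ) (i : ℕ) : Fin n → ℝ :=
  fun k => if (k : ℕ) % 3 = i then 1 else 0

/-!
Write `V = supp v`, `V' = supp v'` (vertices of `Q*(A)` are binary) and suppose
`|V \ V'| ≥ |V' \ V| + 2`. The points of `V \ V'` whose clockwise successor in `V ∪ V'` lies in
`V' \ V` inject into `V' \ V` via that successor, so at least two points `c₀ ≠ c₁` of `V \ V'`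
are not followed by a point of `V' \ V`.
Exchange `v` and `v'` on the arc `S = (c₀, c₁]`: this gives binary vectors `y`, `z` with
`y + z = v + v'`. They are covers: a row arc meeting `V` and `V'` but missed by `y` (or `z`) has
its points of `V` on one side of the cuts and those of `V'` on the other, so walking along it
between the two kinds crosses a cut `cᵢ`; then either `cᵢ ∈ V` is on the wrong side, or the next
point of `V ∪ V'` after `cᵢ` is on the arc and lies in `V' \ V`. As `[v, v']` is an edge,
`y` lies on it; but `y` agrees with `v` at `c₁ ∈ S` and with `v'` at `c₀ ∉ S`, where `v` and `v'`
differ.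
-/

section Circle

variable {n : ℕ}

def cwDist (a b : Fin n) : ℕ := (b - a : Fin n).val

lemma cwDist_lt (a b : Fin n) : cwDist a b < n := (b - a).isLt

def IsSuccIn (W : Set (Fin n)) (c w : Fin n) : Prop :=
  w ∈ W ∧ w ≠ c ∧ ∀ u ∈ W, u ≠ c → cwDist c w ≤ cwDist c u

lemma exists_isSuccIn {W : Set (Fin n)} {c u : Fin n} (hu : u ∈ W) (huc : u ≠ c) :
    ∃ w, IsSuccIn W c w := by
  obtain ⟨w, ⟨hw, hwc⟩, hmin⟩ :=
    Set.exists_min_image (W \ {c}) (cwDist c) (Set.toFinite _) ⟨u, hu, huc⟩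
  exact ⟨w, hw, hwc, fun u hu huc => hmin u ⟨hu, huc⟩⟩

variable [NeZero n]

@[simp] lemma cwDist_self (a : Fin n) : cwDist a a = 0 := by simp [cwDist]

lemma cwDist_eq_zero {a b : Fin n} : cwDist a b = 0 ↔ a = b := by
  rw [cwDist, Fin.val_eq_zero_iff, sub_eq_zero, eq_comm]

lemma cwDist_injective (a : Fin n) : Function.Injective (cwDist a) := fun b c h => by
  simpa using Fin.val_injective h

lemma cwDist_add_cwDist (a b c : Fin n) :
    cwDist a b + cwDist b c = cwDist a c ∨ cwDist a b + cwDist b c = cwDist a c + n := by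
  have hsum : cwDist a c = (cwDist a b + cwDist b c) % n := by
    rw [cwDist, show c - a = (b - a) + (c - b) by abel, Fin.val_add]; rfl
  have := cwDist_lt a b
  have := cwDist_lt b c
  rcases lt_or_ge (cwDist a b + cwDist b c) n with h | h
  · exact Or.inl (by rw [hsum, Nat.mod_eq_of_lt h])
  · right
    rw [hsum, Nat.mod_eq_sub_mod h, Nat.mod_eq_of_lt (by omega)]
    omega

lemma cwDist_add_cwDist_swap {a b : Fin n} (h : a ≠ b) : cwDist a b + cwDist b a = n := by
  have hab : cwDist a b ≠ 0 := fun h' => h (cwDist_eq_zero.1 h')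
  have htri := cwDist_add_cwDist a b a
  have := cwDist_lt a b
  simp only [cwDist_self] at htri
  omega

lemma mem_arc_iff {i j x : Fin n} : x ∈ arc i j ↔ cwDist i x ≤ cwDist i j := by
  constructor
  · rintro ⟨h, hh, rfl⟩
    have hlt : h < n := hh.trans_lt (cwDist_lt i j)
    rwa [cwDist, add_sub_cancel_left, Fin.ofNat_eq_cast, Fin.val_natCast, Nat.mod_eq_of_lt hlt]
  · intro h
    exact ⟨cwDist i x, h, by rw [cwDist, Fin.ofNat_eq_cast, Fin.cast_val_eq_self, add_sub_cancel]⟩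

def arcIoc (c d : Fin n) : Set (Fin n) := {x | 0 < cwDist c x ∧ cwDist c x ≤ cwDist c d}

lemma left_notMem_arcIoc (c d : Fin n) : c ∉ arcIoc c d := fun h => by simpa using h.1

lemma right_mem_arcIoc {c d : Fin n} (h : c ≠ d) : d ∈ arcIoc c d :=
  ⟨Nat.pos_of_ne_zero fun e => h (cwDist_eq_zero.1 e), le_rfl⟩

lemma compl_arcIoc {c d : Fin n} (h : c ≠ d) : (arcIoc c d)ᶜ = arcIoc d c := by
  ext x
  have := cwDist_add_cwDist_swap h
  have := cwDist_add_cwDist c d x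
  have := cwDist_add_cwDist d x c
  have hxc := cwDist_add_cwDist c x c
  rw [cwDist_self] at hxc
  have := cwDist_lt c x; have := cwDist_lt d x; have := cwDist_lt x c
  have := cwDist_lt c d; have := cwDist_lt d c
  simp only [arcIoc, Set.mem_compl_iff, Set.mem_ofPred_eq]
  omega

lemma IsSuccIn.left_injective {W : Set (Fin n)} {c c' w : Fin n} (hc : c ∈ W) (hc' : c' ∈ W)
    (h : IsSuccIn W c w) (h' : IsSuccIn W c' w) : c = c' := by
  by_contra hne
  have hle := h.2.2 c' hc' (Ne.symm hne)
  have hle' := h'.2.2 c hc hne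
  have hwc' : cwDist c w ≠ cwDist c c' := fun e => h'.2.1 (cwDist_injective c e)
  have hwc : cwDist c w ≠ 0 := fun e => h.2.1 (cwDist_eq_zero.1 e).symm
  have := cwDist_add_cwDist c c' w
  have := cwDist_add_cwDist_swap hne
  have := cwDist_lt c' w
  omega

/-- Walking clockwise inside the arc `arc a b` from a point of `(c₀, c₁]` to a point `r` outside
it, one passes `c₁` and then the successor of `c₁` in any `W ∋ c₀, r`. -/
lemma arcIoc_exit_mem_arc {a b c0 c1 p r : Fin n} (hc : c0 ≠ c1)
    (hp : p ∈ arc a b) (hr : r ∈ arc a b) (hpr : cwDist a p ≤ cwDist a r)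
    (hpS : p ∈ arcIoc c0 c1) (hrS : r ∉ arcIoc c0 c1) :
    c1 ∈ arc a b ∧ ∀ {W : Set (Fin n)} {w : Fin n}, c0 ∈ W → r ∈ W → IsSuccIn W c1 w →
      w ∈ arc a b ∧ w ∉ arcIoc c0 c1 := by
  rw [mem_arc_iff] at hp hr
  simp only [arcIoc, Set.mem_ofPred_eq] at hpS hrS
  have := cwDist_add_cwDist_swap hc
  have := cwDist_add_cwDist a c0 p
  have := cwDist_add_cwDist a c0 r
  have := cwDist_add_cwDist a c0 c1
  have := cwDist_lt a c0; have := cwDist_lt a c1; have := cwDist_lt a b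
  have := cwDist_lt c0 p; have := cwDist_lt c0 r; have := cwDist_lt c0 c1
  have hc1 : cwDist a c1 ≤ cwDist a b := by omega
  refine ⟨mem_arc_iff.2 hc1, @fun W w hc0W hrW hw => ?_⟩
  have hrc1 : r ≠ c1 := by rintro rfl; omega
  have hw0 := hw.2.2 c0 hc0W hc
  have hwr := hw.2.2 r hrW hrc1
  have hwc1 : cwDist c1 w ≠ 0 := fun e => hw.2.1 (cwDist_eq_zero.1 e).symm
  have := cwDist_add_cwDist a c1 w
  have := cwDist_add_cwDist a c1 r
  have := cwDist_add_cwDist c0 c1 w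
  have := cwDist_lt a w; have := cwDist_lt c1 w; have := cwDist_lt c1 r; have := cwDist_lt c0 w
  rw [mem_arc_iff]
  simp only [arcIoc, Set.mem_ofPred_eq]
  omega

lemma exists_two_cuts {V V' : Set (Fin n)} (hcard : (V' \ V).ncard + 2 ≤ (V \ V').ncard) :
    ∃ c0 ∈ V \ V', ∃ c1 ∈ V \ V', c0 ≠ c1 ∧
      (∀ w, IsSuccIn (V ∪ V') c0 w → w ∉ V' \ V) ∧
      (∀ w, IsSuccIn (V ∪ V') c1 w → w ∉ V' \ V) := by
  set B := {c ∈ V \ V' | ∃ w, IsSuccIn (V ∪ V') c w ∧ w ∈ V' \ V}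
  have hB : B.ncard ≤ (V' \ V).ncard := by
    choose! f hf using fun c (hc : c ∈ B) => hc.2
    refine Set.ncard_le_ncard_of_injOn f (fun c hc => (hf c hc).2) (fun c hc c' hc' e => ?_)
    exact IsSuccIn.left_injective (Or.inl hc.1.1) (Or.inl hc'.1.1) (hf c hc).1 (e ▸ (hf c' hc').1)
  have hgood : 1 < ((V \ V') \ B).ncard := by
    have := Set.ncard_le_ncard_sdiff_add_ncard (V \ V') B
    omega
  obtain ⟨c0, hc0, c1, hc1, hne⟩ := (Set.one_lt_ncard).1 hgood
  exact ⟨c0, hc0.1, c1, hc1.1, hne, fun w hw hw' => hc0.2 ⟨hc0.1, w, hw, hw'⟩,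
    fun w hw hw' => hc1.2 ⟨hc1.1, w, hw, hw'⟩⟩

lemma arc_inter_ite_arcIoc_nonempty {V V' : Set (Fin n)} {a b c0 c1 : Fin n} (hne : c0 ≠ c1)
    (hc0 : c0 ∈ V) (hsucc1 : ∀ w, IsSuccIn (V ∪ V') c1 w → w ∉ V' \ V)
    (hV : (arc a b ∩ V).Nonempty) (hV' : (arc a b ∩ V').Nonempty) :
    (arc a b ∩ (arcIoc c0 c1).ite V' V).Nonempty := by
  by_contra hsep
  have hVS : ∀ x ∈ arc a b, x ∈ V → x ∈ arcIoc c0 c1 := fun x hx hxV =>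
    by_contra fun hxS => hsep ⟨x, hx, Or.inr ⟨hxV, hxS⟩⟩
  have hV'S : ∀ x ∈ arc a b, x ∈ V' → x ∉ arcIoc c0 c1 := fun x hx hxV' hxS =>
    hsep ⟨x, hx, Or.inl ⟨hxV', hxS⟩⟩
  obtain ⟨d, hdR, hdV⟩ := hV
  obtain ⟨q, hqR, hqV'⟩ := hV'
  rcases le_total (cwDist a d) (cwDist a q) with hdq | hqd
  · obtain ⟨-, hsucc⟩ :=
      arcIoc_exit_mem_arc hne hdR hqR hdq (hVS d hdR hdV) (hV'S q hqR hqV')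
    have hqc1 : q ≠ c1 := fun e => hV'S q hqR hqV' (by rw [e]; exact right_mem_arcIoc hne)
    obtain ⟨w, hw⟩ := exists_isSuccIn (W := V ∪ V') (Or.inr hqV') hqc1
    obtain ⟨hwR, hwS⟩ := hsucc (Or.inl hc0) (Or.inr hqV') hw
    have hwV : w ∉ V := fun h => hwS (hVS w hwR h)
    exact hsucc1 w hw ⟨hw.1.resolve_left hwV, hwV⟩
  · have hqS : q ∈ arcIoc c1 c0 := compl_arcIoc hne ▸ hV'S q hqR hqV'
    have hdS : d ∉ arcIoc c1 c0 := by
      rw [← compl_arcIoc hne, Set.notMem_compl_iff]; exact hVS d hdR hdV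
    obtain ⟨hc0R, -⟩ := arcIoc_exit_mem_arc hne.symm hqR hdR hqd hqS hdS
    exact left_notMem_arcIoc c0 c1 (hVS c0 hc0R hc0)

end Circle

section Segment

variable {E : Type*} [AddCommGroup E] [Module ℝ E]

lemma mem_segment_of_add_eq_add {C : Set E} {v w y z : E}
    (hface : IsExtreme ℝ C (segment ℝ v w)) (hy : y ∈ C) (hz : z ∈ C) (hsum : y + z = v + w) :
    y ∈ segment ℝ v w := by
  have hmid : midpoint ℝ y z = midpoint ℝ v w := by
    rw [midpoint_eq_smul_add, midpoint_eq_smul_add, hsum]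
  exact hface.left_mem_of_mem_openSegment hy hz (hmid ▸ midpoint_mem_segment v w)
    (midpoint_mem_openSegment y z)

lemma piecewise_mem_segment {ι : Type*} {v w : ι → ℝ} {S : Set ι} [DecidablePred (· ∈ S)]
    (h : S.piecewise v w ∈ segment ℝ v w) {t₁ t₂ : ι} (ht₁ : t₁ ∈ S) (ht₂ : t₂ ∉ S)
    (hvw : v t₁ ≠ w t₁) : v t₂ = w t₂ := by
  obtain ⟨a, b, -, -, hab, h⟩ := h
  have h₁ := congrFun h t₁
  have h₂ := congrFun h t₂
  simp only [Pi.add_apply, Pi.smul_apply, smul_eq_mul, Set.piecewise_eq_of_mem _ _ _ ht₁,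
    Set.piecewise_eq_of_notMem _ _ _ ht₂] at h₁ h₂
  have hb : b = 0 := by
    rw [← sub_ne_zero] at hvw
    have : b * (v t₁ - w t₁) = 0 := by linear_combination v t₁ * hab - h₁
    exact (mul_eq_zero.1 this).resolve_right hvw
  subst hb
  rw [add_zero] at hab
  subst hab
  linarith

end Segment

section Covers

variable {m n : ℕ} {A : Matrix (Fin m) (Fin n) ℝ}

def integerCovers (A : Matrix (Fin m) (Fin n) ℝ) : Set (Fin n → ℝ) :=
  {x | (∀ j, ∃ k : ℕ, x j = k) ∧ ∀ i, 1 ≤ ∑ j, A i j * x j}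

lemma IsVertex.mem_integerCovers {v : Fin n → ℝ} (hv : IsVertex (Qstar A) v) :
    v ∈ integerCovers A :=
  extremePoints_convexHull_subset hv

lemma rowSupp_inter_supp_nonempty {x : Fin n → ℝ} (hx : x ∈ integerCovers A) (i : Fin m) :
    (rowSupp A i ∩ supp x).Nonempty := by
  obtain ⟨j, -, hj⟩ := Finset.exists_ne_zero_of_sum_ne_zero (zero_lt_one.trans_le (hx.2 i)).ne'
  exact ⟨j, left_ne_zero_of_mul hj, right_ne_zero_of_mul hj⟩

lemma mem_integerCovers_of_isBinaryVec (hA : IsBinaryMatrix A) {x : Fin n → ℝ}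
    (hx : IsBinaryVec x) (hrow : ∀ i, (rowSupp A i ∩ supp x).Nonempty) :
    x ∈ integerCovers A := by
  refine ⟨fun j => ?_, fun i => ?_⟩
  · rcases hx j with h | h
    exacts [⟨0, by simp [h]⟩, ⟨1, by simp [h]⟩]
  · obtain ⟨j, hAj, hxj⟩ := hrow i
    have hAj1 : A i j = 1 := (hA i j).resolve_left hAj
    have hxj1 : x j = 1 := (hx j).resolve_left hxj
    calc (1 : ℝ) = A i j * x j := by rw [hAj1, hxj1, mul_one]
      _ ≤ ∑ l, A i l * x l := by
        refine Finset.single_le_sum (f := fun l => A i l * x l) (fun l _ => ?_) (Finset.mem_univ j)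
        rcases hA i l with h | h <;> rcases hx l with h' | h' <;> simp [h, h']

lemma add_single_mem_integerCovers (hA : IsBinaryMatrix A) {v : Fin n → ℝ}
    (hv : v ∈ integerCovers A) {j : Fin n} {k : ℕ} (hk : v j = k) (hk2 : 2 ≤ k) {s : ℝ}
    (hs : s = 1 ∨ s = -1) : v + Pi.single j s ∈ integerCovers A := by
  refine ⟨fun l => ?_, fun i => ?_⟩
  · rcases eq_or_ne l j with rfl | hl
    · rcases hs with rfl | rfl
      · exact ⟨k + 1, by simp [hk]⟩
      · exact ⟨k - 1, by simp [hk, Nat.cast_sub (by omega : 1 ≤ k)]; ring⟩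
    · simpa [hl] using hv.1 l
  · change 1 ≤ A i ⬝ᵥ (v + Pi.single j s)
    rw [dotProduct_add, dotProduct_single]
    have hcov : 1 ≤ A i ⬝ᵥ v := hv.2 i
    rcases hA i j with h | h
    · simpa [h] using hcov
    · have hterm : A i j * v j ≤ A i ⬝ᵥ v := by
        refine Finset.single_le_sum (f := fun l => A i l * v l) (fun l _ => ?_) (Finset.mem_univ j)
        obtain ⟨kl, hkl⟩ := hv.1 l
        rw [hkl]
        rcases hA i l with h' | h' <;> simp [h']
      have hk2' : (2 : ℝ) ≤ k := by exact_mod_cast hk2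
      rw [h, hk] at hterm
      rcases hs with rfl | rfl <;> linarith

lemma IsVertex.isBinaryVec (hA : IsBinaryMatrix A) {v : Fin n → ℝ}
    (hv : IsVertex (Qstar A) v) : IsBinaryVec v := by
  have hvC := hv.mem_integerCovers
  intro j
  obtain ⟨k, hk⟩ := hvC.1 j
  by_contra hbin
  have hk2 : 2 ≤ k := by
    rcases k with _ | _ | k
    · exact (hbin (Or.inl (by simpa using hk))).elim
    · exact (hbin (Or.inr (by simpa using hk))).elim
    · omega
  have hmem (s : ℝ) (hs : s = 1 ∨ s = -1) : v + Pi.single j s ∈ Qstar A :=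
    subset_convexHull ℝ _ (add_single_mem_integerCovers hA hvC hk hk2 hs)
  have hmid : v ∈ openSegment ℝ (v + Pi.single j (-1)) (v + Pi.single j 1) := by
    simpa [Pi.single_neg, ← sub_eq_add_neg] using mem_openSegment_sub_add (𝕜 := ℝ) v (Pi.single j 1)
  have := congrFun (hv.2 (hmem _ (Or.inr rfl)) (hmem _ (Or.inl rfl)) hmid) j
  simp at this

lemma supp_piecewise (S : Set (Fin n)) [DecidablePred (· ∈ S)] (x y : Fin n → ℝ) :
    supp (S.piecewise x y) = S.ite (supp x) (supp y) := by
  ext j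
  by_cases h : j ∈ S <;> simp [supp, Set.ite, h]

lemma piecewise_mem_Qstar (hA : IsBinaryMatrix A) {x y : Fin n → ℝ} (hx : IsBinaryVec x)
    (hy : IsBinaryVec y) (S : Set (Fin n)) [DecidablePred (· ∈ S)]
    (hrow : ∀ i, (rowSupp A i ∩ S.ite (supp x) (supp y)).Nonempty) :
    S.piecewise x y ∈ Qstar A := by
  refine subset_convexHull ℝ _ (mem_integerCovers_of_isBinaryVec hA (fun j => ?_) ?_)
  · by_cases h : j ∈ S <;> simp [h, hx j, hy j]
  · rwa [supp_piecewise]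

end Covers

lemma AdjacentVerts.symm {n : ℕ} {C : Set (Fin n → ℝ)} {v w : Fin n → ℝ}
    (h : AdjacentVerts C v w) : AdjacentVerts C w v :=
  ⟨h.1.symm, h.2.2.1, h.2.1, segment_symm ℝ v w ▸ h.2.2.2⟩

theorem ncard_supp_le_of_adjacentVerts {m n : ℕ} [NeZero n] {A : Matrix (Fin m) (Fin n) ℝ}
    (hA : IsBinaryMatrix A) (hcirc : RowCircular A) {v v' : Fin n → ℝ}
    (hadj : AdjacentVerts (Qstar A) v v') : (supp v).ncard ≤ (supp v').ncard + 1 := by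
  classical
  obtain ⟨-, hv, hv', hface⟩ := hadj
  by_contra! hcard
  have hcard' : (supp v' \ supp v).ncard + 2 ≤ (supp v \ supp v').ncard := by
    have h₁ := Set.ncard_inter_add_ncard_sdiff_eq_ncard (supp v) (supp v')
    have h₂ := Set.ncard_inter_add_ncard_sdiff_eq_ncard (supp v') (supp v)
    rw [Set.inter_comm] at h₂
    omega
  obtain ⟨c0, hc0, c1, hc1, hne, hsucc0, hsucc1⟩ := exists_two_cuts hcard'
  have hV i := rowSupp_inter_supp_nonempty hv.mem_integerCovers i
  have hV' i := rowSupp_inter_supp_nonempty hv'.mem_integerCovers i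
  have hy : (arcIoc c0 c1).piecewise v v' ∈ Qstar A :=
    piecewise_mem_Qstar hA (hv.isBinaryVec hA) (hv'.isBinaryVec hA) _ fun i => by
      obtain ⟨a, b, hab⟩ := hcirc i
      rw [hab, ← Set.ite_compl, compl_arcIoc hne]
      exact arc_inter_ite_arcIoc_nonempty hne.symm hc1.1 hsucc0 (hab ▸ hV i) (hab ▸ hV' i)
  have hz : (arcIoc c0 c1).piecewise v' v ∈ Qstar A :=
    piecewise_mem_Qstar hA (hv'.isBinaryVec hA) (hv.isBinaryVec hA) _ fun i => by
      obtain ⟨a, b, hab⟩ := hcirc i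
      rw [hab]
      exact arc_inter_ite_arcIoc_nonempty hne hc0.1 hsucc1 (hab ▸ hV i) (hab ▸ hV' i)
  have hsum : (arcIoc c0 c1).piecewise v v' + (arcIoc c0 c1).piecewise v' v = v + v' := by
    ext j
    by_cases h : j ∈ arcIoc c0 c1 <;> simp [h, add_comm]
  have hc0eq := piecewise_mem_segment (mem_segment_of_add_eq_add hface hy hz hsum)
    (right_mem_arcIoc hne) (left_notMem_arcIoc c0 c1) (fun e => hc1.2 (show v' c1 ≠ 0 from e ▸ hc1.1))
  exact hc0.2 (show v' c0 ≠ 0 from hc0eq ▸ hc0.1)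

/-- for row circular `A`, supports of adjacent vertices of `Q*(A)` have
cardinalities differing by at most one. -/
theorem stmt12 {m n : ℕ} [NeZero n] (A : Matrix (Fin m) (Fin n) ℝ)
    (hstd : StandardAssumptions A) (hcirc : RowCircular A)
    (v v' : Fin n → ℝ) (hadj : AdjacentVerts (Qstar A) v v') :
    (supp v).ncard ≤ (supp v').ncard + 1 ∧ (supp v').ncard ≤ (supp v).ncard + 1 :=
  ⟨ncard_supp_le_of_adjacentVerts hstd.1 hcirc hadj,
    ncard_supp_le_of_adjacentVerts hstd.1 hcirc hadj.symm⟩
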